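/- Let K be a field, f ∈ K[x_1,…,x_n] nonzero, ω ∈ (ℝ_{≥0})^n, and let ν belong to the closure in ℝ^n of the set {u ∈ (ℝ_{≥0})^n : In_u f = In_ω f}. Then supp(In_ω f) ⊆ supp(In_ν f). In particular, if In_ν f is a monomial then In_ω f is a monomial. -/

import Mathlib

/-! An exponent `μ` lies in `supp (In_u f)` iff `μ ∈ supp f` and `μ` minimizes `u`-weight on
`supp f`. For fixed `μ` this minimality is a closed condition on `u` (finitely many weak linear
inequalities), so it passes from the weights `u` with `In_u f = In_ω f` to their limit `ν`. -/

open MvPolynomial Matrix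

open Classical in
/-- The `w`-initial part of a multivariate polynomial: the sum of the terms whose
exponents have minimal `w`-weight among the exponents of `f`. -/
noncomputable def initialPart {n : ℕ} {K : Type*} [CommSemiring K] (w : Fin n → ℝ)
    (f : MvPolynomial (Fin n) K) : MvPolynomial (Fin n) K :=
  ∑ μ ∈ f.support,
    if ∀ ν ∈ f.support, ∑ i, w i * (μ i : ℝ) ≤ ∑ i, w i * (ν i : ℝ)
    then monomial μ (f.coeff μ) else 0

section InitialPart

variable {n : ℕ} {K : Type*} [CommSemiring K]

open Classical in
lemma coeff_initialPart (w : Fin n → ℝ) (f : MvPolynomial (Fin n) K) (μ : Fin n →₀ ℕ) :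
    (initialPart w f).coeff μ =
      if ∀ ν ∈ f.support, ∑ i, w i * (μ i : ℝ) ≤ ∑ i, w i * (ν i : ℝ)
      then f.coeff μ else 0 := by
  rw [initialPart, coeff_sum, Finset.sum_eq_single μ]
  · split_ifs <;> simp
  · intro ν _ hνμ
    split_ifs <;> simp [coeff_monomial, hνμ]
  · intro hμ
    rw [notMem_support_iff.mp hμ]
    split_ifs <;> simp

lemma mem_support_initialPart {w : Fin n → ℝ} {f : MvPolynomial (Fin n) K} {μ : Fin n →₀ ℕ} :
    μ ∈ (initialPart w f).support ↔
      μ ∈ f.support ∧ ∀ ν ∈ f.support, ∑ i, w i * (μ i : ℝ) ≤ ∑ i, w i * (ν i : ℝ) := by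
  rw [mem_support_iff, coeff_initialPart, mem_support_iff]
  split_ifs with h
  · exact ⟨fun hμ => ⟨hμ, h⟩, And.left⟩
  · exact ⟨fun h0 => absurd rfl h0, fun hμ => absurd hμ.2 h⟩

end InitialPart

lemma isClosed_setOf_weight_minimal {n : ℕ} (s : Finset (Fin n →₀ ℕ)) (μ : Fin n →₀ ℕ) :
    IsClosed {u : Fin n → ℝ | ∀ ν ∈ s, ∑ i, u i * (μ i : ℝ) ≤ ∑ i, u i * (ν i : ℝ)} := by
  simp only [Set.ofPred_forall]
  exact isClosed_biInter fun ν _ => isClosed_le (by fun_prop) (by fun_prop)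

theorem support_initialPart_subset_general {n : ℕ} {K : Type*} [Field K]
    (f : MvPolynomial (Fin n) K)
    (w : Fin n → ℝ) (v : Fin n → ℝ)
    (hv : v ∈ closure {u : Fin n → ℝ | (∀ i, 0 ≤ u i) ∧ initialPart u f = initialPart w f}) :
    (initialPart w f).support ⊆ (initialPart v f).support := by
  intro μ hμ
  have hμf : μ ∈ f.support := (mem_support_initialPart.mp hμ).1
  have hsub : {u : Fin n → ℝ | (∀ i, 0 ≤ u i) ∧ initialPart u f = initialPart w f} ⊆
      {u | ∀ ν ∈ f.support, ∑ i, u i * (μ i : ℝ) ≤ ∑ i, u i * (ν i : ℝ)} := by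
    rintro u ⟨-, hu⟩
    exact (mem_support_initialPart.mp (hu ▸ hμ)).2
  exact mem_support_initialPart.mpr
    ⟨hμf, closure_minimal hsub (isClosed_setOf_weight_minimal f.support μ) hv⟩

/-- If `ν` belongs to the closure of the set of nonnegative vectors `u`
with `In_u f = In_ω f`, then `supp (In_ω f) ⊆ supp (In_ν f)`.  In particular, if
`In_ν f` is a monomial then so is `In_ω f`. -/
theorem support_initialPart_subset {n : ℕ} {K : Type*} [Field K]
    (f : MvPolynomial (Fin n) K) (hf : f ≠ 0)
    (w : Fin n → ℝ) (hw : ∀ i, 0 ≤ w i) (v : Fin n → ℝ)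
    (hv : v ∈ closure {u : Fin n → ℝ | (∀ i, 0 ≤ u i) ∧ initialPart u f = initialPart w f}) :
    (initialPart w f).support ⊆ (initialPart v f).support :=
  support_initialPart_subset_general f w v hv
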